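/- arXiv:0902.3723 — 6 statements merged into one kernel-verified Lean document; each statement's English description precedes it below -/
import Mathlib

section
/- The cubic polynomial 6a³ − 18a² + 9a − 1 has three distinct real roots. -/
open Set

section SignChanges

variable {α δ : Type*} [ConditionallyCompleteLinearOrder α] [TopologicalSpace α] [OrderTopology α]
  [DenselyOrdered α] [LinearOrder δ] [TopologicalSpace δ] [OrderClosedTopology δ] [Zero δ]
  {f : α → δ}

theorem exists_mem_Ioo_eq_zero_of_neg_of_pos (hf : Continuous f) {a b : α} (hab : a ≤ b)
    (ha : f a < 0) (hb : 0 < f b) : ∃ x ∈ Ioo a b, f x = 0 :=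
  intermediate_value_Ioo hab hf.continuousOn ⟨ha, hb⟩

theorem exists_mem_Ioo_eq_zero_of_pos_of_neg (hf : Continuous f) {a b : α} (hab : a ≤ b)
    (ha : 0 < f a) (hb : f b < 0) : ∃ x ∈ Ioo a b, f x = 0 :=
  intermediate_value_Ioo' hab hf.continuousOn ⟨hb, ha⟩

theorem exists_three_zeros_of_sign_changes (hf : Continuous f) {a b c d : α}
    (hab : a ≤ b) (hbc : b ≤ c) (hcd : c ≤ d)
    (ha : f a < 0) (hb : 0 < f b) (hc : f c < 0) (hd : 0 < f d) :
    ∃ x y z, x < y ∧ y < z ∧ f x = 0 ∧ f y = 0 ∧ f z = 0 := by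
  obtain ⟨x, hx, hx0⟩ := exists_mem_Ioo_eq_zero_of_neg_of_pos hf hab ha hb
  obtain ⟨y, hy, hy0⟩ := exists_mem_Ioo_eq_zero_of_pos_of_neg hf hbc hb hc
  obtain ⟨z, hz, hz0⟩ := exists_mem_Ioo_eq_zero_of_neg_of_pos hf hcd hc hd
  exact ⟨x, y, z, hx.2.trans hy.1, hy.2.trans hz.1, hx0, hy0, hz0⟩

end SignChanges

theorem cubic_three_distinct_real_roots :
    ∃ x y z : ℝ, x ≠ y ∧ x ≠ z ∧ y ≠ z ∧
      6*x^3 - 18*x^2 + 9*x - 1 = 0 ∧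
      6*y^3 - 18*y^2 + 9*y - 1 = 0 ∧
      6*z^3 - 18*z^2 + 9*z - 1 = 0 := by
  -- the cubic takes the values `-1, 16/125, -4, 26` at `0 < 1/5 < 1 < 3`
  obtain ⟨x, y, z, hxy, hyz, hx, hy, hz⟩ :=
    exists_three_zeros_of_sign_changes (f := fun a : ℝ => 6*a^3 - 18*a^2 + 9*a - 1)
      (by fun_prop) (a := 0) (b := 1/5) (c := 1) (d := 3)
      (by norm_num) (by norm_num) (by norm_num) (by norm_num) (by norm_num) (by norm_num)
      (by norm_num)
  exact ⟨x, y, z, hxy.ne, (hxy.trans hyz).ne, hyz.ne, hx, hy, hz⟩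
end

section
/- Under the same definitions (a a root of 6a³ − 18a² + 9a − 1 = 0, u = a(γ−1)+1 ≠ 0, a ≠ 0, and p₂, p₃, p₄, p₅ as above), the weights satisfy p₄ + p₅ = 1/3. -/
theorem p4_p5_third_general (a γ u : ℝ) (hu : u = a*(γ-1)+1) (hu0 : u ≠ 0) :
    (-6*a^2 + 2*a*(γ+5) - 1)/(6*u) + (2*a^2 - 4*a + 1)/(2*u) = 1/3 := by
  have numerator_sum : (-6*a^2 + 2*a*(γ+5) - 1) + 3*(2*a^2 - 4*a + 1) = 2*u := by
    rw [hu]; ring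
  calc (-6*a^2 + 2*a*(γ+5) - 1)/(6*u) + (2*a^2 - 4*a + 1)/(2*u)
      = ((-6*a^2 + 2*a*(γ+5) - 1) + 3*(2*a^2 - 4*a + 1))/(6*u) := by field_simp; ring
    _ = 2*u/(6*u) := by rw [numerator_sum]
    _ = 1/3 := by field_simp; norm_num

theorem p4_p5_third (a γ u : ℝ) (hu : u = a*(γ-1)+1) (hu0 : u ≠ 0)
    (ha0 : a ≠ 0) (ha : 6*a^3 - 18*a^2 + 9*a - 1 = 0) :
    (-6*a^2 + 2*a*(γ+5) - 1)/(6*u) + (2*a^2 - 4*a + 1)/(2*u) = 1/3 :=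
  p4_p5_third_general a γ u hu hu0
end

section
/- Let a be a root of 6a³ − 18a² + 9a − 1 = 0, u = a(γ−1)+1 ≠ 0, a ≠ 0, and define p₂, p₃, p₄, p₅ as above. Then a·(a·p₂ + 3a·p₃ + (2−a)·p₄ + 3(2aγ+1)·p₅) = 1/6. -/
lemma ne_zero_of_cubic_eq_zero {a : ℝ} (ha : 6*a^3 - 18*a^2 + 9*a - 1 = 0) : a ≠ 0 := by
  rintro rfl
  norm_num at ha

lemma third_order_sum_sub_one_sixth {a γ u : ℝ} (hu : u = a*(γ-1)+1) (hu0 : u ≠ 0)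
    (ha0 : a ≠ 0) :
    a*(a*((2*a^2*(7*γ-1) - a*(7*γ-3) + γ)/(6*a*u))
      + 3*a*((-2*a^2*(8*γ+1) + a*(13*γ+1) - 2*γ)/(6*a*u))
      + (2-a)*((-6*a^2 + 2*a*(γ+5) - 1)/(6*u))
      + 3*(2*a*γ+1)*((2*a^2 - 4*a + 1)/(2*u))) - 1/6
      = ((6*γ+1)*a + 1) * (6*a^3 - 18*a^2 + 9*a - 1) / (6*u) := by
  subst hu
  field_simp
  ring

theorem third_order_condition_general (a γ u : ℝ) (hu : u = a*(γ-1)+1) (hu0 : u ≠ 0)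
    (ha : 6*a^3 - 18*a^2 + 9*a - 1 = 0) :
    a*(a*((2*a^2*(7*γ-1) - a*(7*γ-3) + γ)/(6*a*u))
      + 3*a*((-2*a^2*(8*γ+1) + a*(13*γ+1) - 2*γ)/(6*a*u))
      + (2-a)*((-6*a^2 + 2*a*(γ+5) - 1)/(6*u))
      + 3*(2*a*γ+1)*((2*a^2 - 4*a + 1)/(2*u))) = 1/6 := by
  rw [← sub_eq_zero, third_order_sum_sub_one_sixth hu hu0 (ne_zero_of_cubic_eq_zero ha), ha]
  simp

theorem third_order_condition (a γ u : ℝ) (hu : u = a*(γ-1)+1) (hu0 : u ≠ 0)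
    (ha0 : a ≠ 0) (ha : 6*a^3 - 18*a^2 + 9*a - 1 = 0) :
    a*(a*((2*a^2*(7*γ-1) - a*(7*γ-3) + γ)/(6*a*u))
      + 3*a*((-2*a^2*(8*γ+1) + a*(13*γ+1) - 2*γ)/(6*a*u))
      + (2-a)*((-6*a^2 + 2*a*(γ+5) - 1)/(6*u))
      + 3*(2*a*γ+1)*((2*a^2 - 4*a + 1)/(2*u))) = 1/6 :=
  third_order_condition_general a γ u hu hu0 ha
end

section
/- Let a be a root of 6a³ − 18a² + 9a − 1 = 0, with a ≠ 1/2, 6a²−6a+1 ≠ 0, let u = a(γ−1)+1 ≠ 0, and set p₅ = (2a²−4a+1)/(2u), p₆ = (1−2a)/u, β₄₃ = 1/(6a·p₅), β₁ = a·p₅/p₆, β₂ = 2(1−β₄₃²)/(3−2β₄₃) (assuming 3−2β₄₃ ≠ 0). Then β₄₃·(1/3) + β₂·p₆ = 1/2 and β₄₃²·(1/3) + β₂²·p₆ = 1/3 hold simultaneously if and only if γ satisfies 4a³γ³ − 12a(15a²−10a+1)γ² + 3a(374a²−228a+33)γ + 4(813a²−486a+175/3) = 0. -/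
/-!
Since `6a³ - 18a² + 9a - 1 = 0` gives `3a(2a² - 4a + 1) = 6a² - 6a + 1 =: q`, the coefficient
`β₄₃` equals `u / q`. The value of `β₂` is exactly the one that makes the second condition a
consequence of the first, so the system collapses to the single equation
`12 (1 - 2a) (q² - u²) = u (3q - 2u)²`, a cubic in `u` and hence in `γ`; reducing its coefficients
modulo the cubic satisfied by `a` gives equation (19).
-/

lemma order_conditions_iff {β p β₂ : ℝ} (hden : 3 - 2*β ≠ 0)
    (hβ₂ : β₂ = 2*(1 - β^2)/(3 - 2*β)) :
    (β*(1/3) + β₂*p = 1/2 ∧ β^2*(1/3) + β₂^2*p = 1/3) ↔ 12*(1 - β^2)*p = (3 - 2*β)^2 := by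
  have hβ₂_mul : β₂ * (3 - 2*β) = 2*(1 - β^2) := by rw [hβ₂]; field_simp
  have first_iff : β*(1/3) + β₂*p = 1/2 ↔ 12*(1 - β^2)*p = (3 - 2*β)^2 := by
    constructor
    · intro h; linear_combination (6*(3 - 2*β)) * h - 6*p * hβ₂_mul
    · intro h
      refine mul_left_cancel₀ hden ?_
      linear_combination p * hβ₂_mul + (1/6) * h
  refine ⟨fun h ↦ first_iff.mp h.1, fun h ↦ ⟨first_iff.mpr h, ?_⟩⟩
  have h₁ := first_iff.mpr h
  linear_combination β₂ * h₁ + (1/6) * hβ₂_mul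

lemma one_div_six_mul_p₅_eq {a u : ℝ} (ha : 6*a^3 - 18*a^2 + 9*a - 1 = 0) :
    1/(6*a*((2*a^2 - 4*a + 1)/(2*u))) = u/(6*a^2 - 6*a + 1) := by
  have hq : 3*a*(2*a^2 - 4*a + 1) = 6*a^2 - 6*a + 1 := by linear_combination ha
  rw [← hq, show 6*a*((2*a^2 - 4*a + 1)/(2*u)) = 3*a*(2*a^2 - 4*a + 1)/u by ring, one_div_div]

lemma order_condition_clear_denoms {c q u : ℝ} (hq : q ≠ 0) (hu : u ≠ 0) :
    12*(1 - (u/q)^2)*(c/u) = (3 - 2*(u/q))^2 ↔ 12*c*(q^2 - u^2) = u*(3*q - 2*u)^2 := by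
  field_simp

lemma cubic_in_u_iff_cubic_in_gamma {a γ u : ℝ} (ha : 6*a^3 - 18*a^2 + 9*a - 1 = 0)
    (hu : u = a*(γ-1)+1) :
    12*(1 - 2*a)*((6*a^2 - 6*a + 1)^2 - u^2) = u*(3*(6*a^2 - 6*a + 1) - 2*u)^2 ↔
      4*a^3*γ^3 - 12*a*(15*a^2 - 10*a + 1)*γ^2 + 3*a*(374*a^2 - 228*a + 33)*γ
        + 4*(813*a^2 - 486*a + 175/3) = 0 := by
  subst hu
  constructor <;> intro h <;>
    linear_combination -h + (-697/3 - 60*a - 78*a*γ + 12*a*γ^2 - 90*a^2 - 54*a^2*γ) * ha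

theorem gamma_cubic_iff_general (a γ u : ℝ) (ha : 6*a^3 - 18*a^2 + 9*a - 1 = 0)
    (hq : 6*a^2 - 6*a + 1 ≠ 0)
    (hu : u = a*(γ-1)+1) (hu0 : u ≠ 0)
    (p₅ : ℝ) (hp5 : p₅ = (2*a^2 - 4*a + 1)/(2*u))
    (p₆ : ℝ) (hp6 : p₆ = (1-2*a)/u)
    (β₄₃ : ℝ) (hb43 : β₄₃ = 1/(6*a*p₅))
    (hden : 3 - 2*β₄₃ ≠ 0)
    (β₂ : ℝ) (hb2 : β₂ = 2*(1 - β₄₃^2)/(3 - 2*β₄₃)) :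
    (β₄₃*(1/3) + β₂*p₆ = 1/2 ∧ β₄₃^2*(1/3) + β₂^2*p₆ = 1/3) ↔
      4*a^3*γ^3 - 12*a*(15*a^2 - 10*a + 1)*γ^2 + 3*a*(374*a^2 - 228*a + 33)*γ
        + 4*(813*a^2 - 486*a + 175/3) = 0 := by
  rw [order_conditions_iff hden hb2, hb43, hp5, one_div_six_mul_p₅_eq ha, hp6,
    order_condition_clear_denoms hq hu0]
  exact cubic_in_u_iff_cubic_in_gamma ha hu

theorem gamma_cubic_iff (a γ u : ℝ) (ha : 6*a^3 - 18*a^2 + 9*a - 1 = 0)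
    (ha2 : a ≠ 1/2) (hq : 6*a^2 - 6*a + 1 ≠ 0)
    (hu : u = a*(γ-1)+1) (hu0 : u ≠ 0)
    (p₅ : ℝ) (hp5 : p₅ = (2*a^2 - 4*a + 1)/(2*u))
    (p₆ : ℝ) (hp6 : p₆ = (1-2*a)/u)
    (β₄₃ : ℝ) (hb43 : β₄₃ = 1/(6*a*p₅))
    (β₁ : ℝ) (hb1 : β₁ = a*p₅/p₆)
    (hden : 3 - 2*β₄₃ ≠ 0)
    (β₂ : ℝ) (hb2 : β₂ = 2*(1 - β₄₃^2)/(3 - 2*β₄₃)) :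
    (β₄₃*(1/3) + β₂*p₆ = 1/2 ∧ β₄₃^2*(1/3) + β₂^2*p₆ = 1/3) ↔
      4*a^3*γ^3 - 12*a*(15*a^2 - 10*a + 1)*γ^2 + 3*a*(374*a^2 - 228*a + 33)*γ
        + 4*(813*a^2 - 486*a + 175/3) = 0 :=
  gamma_cubic_iff_general a γ u ha hq hu hu0 p₅ hp5 p₆ hp6 β₄₃ hb43 hden β₂ hb2
end

section
/- Let a ≈ 0.43586652150845 be the root of 6a³ − 18a² + 9a − 1 = 0 lying in (0.4, 0.5). Then the cubic in γ given by 4a³γ³ − 12a(15a²−10a+1)γ² + 3a(374a²−228a+33)γ + 4(813a²−486a+175/3) = 0 has three distinct real roots, all negative. -/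
/-!
Locating `a` in `(0.4358, 0.4359)` is enough to fix the signs of the cubic at `-5, -3, -2, 0`
(the value at `0` is the delicate one: `813a² - 486a + 175/3` vanishes near `0.431`).
The pattern `-, +, -, +` gives a root in each gap by the intermediate value theorem, and a
cubic has no further roots.
-/

open Set

/-- Dividing out the known roots one at a time: two roots pin down the linear factor
`c₃ (x + x₁ + x₂) + c₂` of the remaining quotient, and a third root then forces `x = x₃`. -/
theorem eq_or_eq_or_eq_of_cubic_eq_zero {R : Type*} [CommRing R] [IsDomain R] {f : R → R}
    {c₃ c₂ c₁ c₀ : R} (hf : ∀ x, f x = c₃ * x ^ 3 + c₂ * x ^ 2 + c₁ * x + c₀) (hc : c₃ ≠ 0)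
    {x₁ x₂ x₃ : R} (h₁₂ : x₁ ≠ x₂) (h₁₃ : x₁ ≠ x₃) (h₂₃ : x₂ ≠ x₃)
    (hx₁ : f x₁ = 0) (hx₂ : f x₂ = 0) (hx₃ : f x₃ = 0) {x : R} (hx : f x = 0) :
    x = x₁ ∨ x = x₂ ∨ x = x₃ := by
  by_contra! ⟨hne₁, hne₂, hne₃⟩
  have quotient_eq_zero : ∀ y, f y = 0 → y ≠ x₁ →
      c₃ * (y ^ 2 + y * x₁ + x₁ ^ 2) + c₂ * (y + x₁) + c₁ = 0 := fun y hy hy₁ => by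
    have h : (y - x₁) * (c₃ * (y ^ 2 + y * x₁ + x₁ ^ 2) + c₂ * (y + x₁) + c₁) = 0 := by
      linear_combination (hf y).symm.trans hy - (hf x₁).symm.trans hx₁
    exact (mul_eq_zero.1 h).resolve_left (sub_ne_zero.2 hy₁)
  have linear_eq_zero : ∀ y, f y = 0 → y ≠ x₁ → y ≠ x₂ → c₃ * (y + x₁ + x₂) + c₂ = 0 :=
    fun y hy hy₁ hy₂ => by
      have h : (y - x₂) * (c₃ * (y + x₁ + x₂) + c₂) = 0 := by
        linear_combination quotient_eq_zero y hy hy₁ - quotient_eq_zero x₂ hx₂ h₁₂.symm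
      exact (mul_eq_zero.1 h).resolve_left (sub_ne_zero.2 hy₂)
  have h : c₃ * (x - x₃) = 0 := by
    linear_combination linear_eq_zero x hx hne₁ hne₂ - linear_eq_zero x₃ hx₃ h₁₃.symm h₂₃.symm
  exact hne₃ (sub_eq_zero.1 ((mul_eq_zero.1 h).resolve_left hc))

theorem exists_three_zeros_of_sign_changes_s13 {f : ℝ → ℝ} (hf : Continuous f) {p q r s : ℝ}
    (hpq : p ≤ q) (hqr : q ≤ r) (hrs : r ≤ s)
    (hp : f p < 0) (hq : 0 < f q) (hr : f r < 0) (hs : 0 < f s) :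
    ∃ x₁ ∈ Ioo p q, ∃ x₂ ∈ Ioo q r, ∃ x₃ ∈ Ioo r s, f x₁ = 0 ∧ f x₂ = 0 ∧ f x₃ = 0 := by
  obtain ⟨x₁, hx₁, h₁⟩ := intermediate_value_Ioo hpq hf.continuousOn ⟨hp, hq⟩
  obtain ⟨x₂, hx₂, h₂⟩ := intermediate_value_Ioo' hqr hf.continuousOn ⟨hr, hq⟩
  obtain ⟨x₃, hx₃, h₃⟩ := intermediate_value_Ioo hrs hf.continuousOn ⟨hr, hs⟩
  exact ⟨x₁, hx₁, x₂, hx₂, x₃, hx₃, h₁, h₂, h₃⟩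

theorem middle_root_bounds {a : ℝ} (ha : 6 * a ^ 3 - 18 * a ^ 2 + 9 * a - 1 = 0)
    (ha₁ : 0.4 < a) (ha₂ : a < 0.5) : 0.4358 < a ∧ a < 0.4359 := by
  constructor <;> nlinarith [sq_nonneg (a - 0.4358), sq_nonneg (a - 0.4359), sq_nonneg a]

theorem gamma_cubic_three_negative_roots (a : ℝ)
    (ha : 6*a^3 - 18*a^2 + 9*a - 1 = 0) (ha1 : 0.4 < a) (ha2 : a < 0.5) :
    ∃ g₁ g₂ g₃ : ℝ, g₁ ≠ g₂ ∧ g₁ ≠ g₃ ∧ g₂ ≠ g₃ ∧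
      g₁ < 0 ∧ g₂ < 0 ∧ g₃ < 0 ∧
      (∀ g ∈ ({g₁, g₂, g₃} : Set ℝ),
        4*a^3*g^3 - 12*a*(15*a^2 - 10*a + 1)*g^2 + 3*a*(374*a^2 - 228*a + 33)*g
          + 4*(813*a^2 - 486*a + 175/3) = 0) ∧
      (∀ g : ℝ,
        4*a^3*g^3 - 12*a*(15*a^2 - 10*a + 1)*g^2 + 3*a*(374*a^2 - 228*a + 33)*g
          + 4*(813*a^2 - 486*a + 175/3) = 0 → g = g₁ ∨ g = g₂ ∨ g = g₃) := by
  obtain ⟨hlo, hhi⟩ := middle_root_bounds ha ha1 ha2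
  set f : ℝ → ℝ := fun g => 4*a^3*g^3 - 12*a*(15*a^2 - 10*a + 1)*g^2
    + 3*a*(374*a^2 - 228*a + 33)*g + 4*(813*a^2 - 486*a + 175/3) with hf
  have hf₅ : f (-5) < 0 := by simp only [hf]; nlinarith [sq_nonneg (a - 0.43586), sq_nonneg a]
  have hf₃ : 0 < f (-3) := by simp only [hf]; nlinarith [sq_nonneg (a - 0.43586), sq_nonneg a]
  have hf₂ : f (-2) < 0 := by simp only [hf]; nlinarith [sq_nonneg (a - 0.43586), sq_nonneg a]
  have hf₀ : 0 < f 0 := by simp only [hf]; nlinarith [sq_nonneg (a - 0.43586), sq_nonneg a]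
  obtain ⟨g₁, ⟨-, h₁⟩, g₂, ⟨h₂l, h₂r⟩, g₃, ⟨h₃l, h₃r⟩, hg₁, hg₂, hg₃⟩ :=
    exists_three_zeros_of_sign_changes_s13 (by fun_prop) (by norm_num : (-5 : ℝ) ≤ -3)
      (by norm_num : (-3 : ℝ) ≤ -2) (by norm_num : (-2 : ℝ) ≤ 0) hf₅ hf₃ hf₂ hf₀
  have hf_cubic : ∀ x, f x = 4 * a ^ 3 * x ^ 3 + (-12 * a * (15 * a ^ 2 - 10 * a + 1)) * x ^ 2
      + 3 * a * (374 * a ^ 2 - 228 * a + 33) * x + 4 * (813 * a ^ 2 - 486 * a + 175 / 3) :=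
    fun x => by simp only [hf]; ring
  refine ⟨g₁, g₂, g₃, by linarith, by linarith, by linarith, by linarith, by linarith,
    by linarith, ?_, fun g hg => eq_or_eq_or_eq_of_cubic_eq_zero hf_cubic (by positivity)
      (by linarith) (by linarith) (by linarith) hg₁ hg₂ hg₃ hg⟩
  rintro g (rfl | rfl | rfl) <;> assumption
end

section
/- Let a ∈ ℝ with a ≠ 0, γ ∈ ℝ, and β₄₃ ≠ 0, β₆₄ + β₆₅ ≠ 0. If real numbers r₁,…,r₆ satisfy the six equations: (i) r₁+r₂+r₃+r₄+(γ+1)r₅+r₆ = 1; (ii) r₂+r₃+γr₅ = 1; (iii) a(r₂+2r₃+(3γ+1)r₅) = 1/2; (iv) a(r₂+2r₃+3γr₅) = 1/2; (v) β₄₃(r₄+r₅) + (a+β₆₃+β₆₄+(γ+1)β₆₅)r₆ = 1/2; (vi) β₄₃(r₄+r₅) + (a+β₆₃+γβ₆₅)r₆ = 1/2, then r₅ = 0, r₆ = 0, r₂ = (4a−1)/(2a), r₃ = (1−2a)/(2a), r₄ = 1/(2β₄₃), r₁ = −1/(2β₄₃). -/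
theorem embedded_method_unique (a γ β₄₃ β₆₃ β₆₄ β₆₅ : ℝ)
    (ha0 : a ≠ 0) (hb43 : β₄₃ ≠ 0) (hb : β₆₄ + β₆₅ ≠ 0)
    (r₁ r₂ r₃ r₄ r₅ r₆ : ℝ)
    (h1 : r₁ + r₂ + r₃ + r₄ + (γ+1)*r₅ + r₆ = 1)
    (h2 : r₂ + r₃ + γ*r₅ = 1)
    (h3 : a*(r₂ + 2*r₃ + (3*γ+1)*r₅) = 1/2)
    (h4 : a*(r₂ + 2*r₃ + 3*γ*r₅) = 1/2)
    (h5 : β₄₃*(r₄ + r₅) + (a + β₆₃ + β₆₄ + (γ+1)*β₆₅)*r₆ = 1/2)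
    (h6 : β₄₃*(r₄ + r₅) + (a + β₆₃ + γ*β₆₅)*r₆ = 1/2) :
    r₅ = 0 ∧ r₆ = 0 ∧ r₂ = (4*a-1)/(2*a) ∧ r₃ = (1-2*a)/(2*a) ∧
      r₄ = 1/(2*β₄₃) ∧ r₁ = -1/(2*β₄₃) := by
  have hr₅ : r₅ = 0 :=
    eq_zero_of_ne_zero_of_mul_left_eq_zero ha0 (by linear_combination h3 - h4)
  have hr₆ : r₆ = 0 :=
    eq_zero_of_ne_zero_of_mul_left_eq_zero hb (by linear_combination h5 - h6)
  subst hr₅ hr₆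
  have h2a : 2 * a ≠ 0 := mul_ne_zero two_ne_zero ha0
  have hr₄ : r₄ = 1 / (2 * β₄₃) := by
    rw [eq_div_iff (mul_ne_zero two_ne_zero hb43)]
    linear_combination 2 * h5
  refine ⟨rfl, rfl, ?_, ?_, hr₄, ?_⟩
  · rw [eq_div_iff h2a]
    linear_combination 4 * a * h2 - 2 * h4
  · rw [eq_div_iff h2a]
    linear_combination 2 * h4 - 2 * a * h2
  · rw [neg_div, ← hr₄]
    linear_combination h1 - h2
end
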